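/- Let K be a field, let g be a finite-dimensional Lie algebra over K, and let [·,·]_* be a Lie algebra bracket on the dual space g*. Let ρ be the coadjoint action of g on g*, given by ρ_X(φ) = −φ∘ad_X, and let σ be the coadjoint action of g* on g, defined (using finite-dimensionality of g) by ψ(σ_φ(X)) = −([φ,ψ]_*)(X) for all ψ ∈ g*. Then ρ and σ are representations, and the matched pair equations hold for (g, g*, ρ, σ) if and only if the cocycle (Lie bialgebra) condition holds: for all X, Y ∈ g and φ, ψ ∈ g*, [φ,ψ]_*([X,Y]) = ([φ∘ad_X, ψ]_* + [φ, ψ∘ad_X]_*)(Y) − ([φ∘ad_Y, ψ]_* + [φ, ψ∘ad_Y]_*)(X), where φ∘ad_X ∈ g* denotes the functional Z ↦ φ([X,Z]). (This is the one-point-base case of the theorems that (A, A*) is a Lie bialgebroid if and only if the cotangent double T*A is a double Lie algebroid, and that vacant double Lie algebroids correspond to matched pairs.) -/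

import Mathlib

/-- A `K`-bilinear, alternating bracket on the `K`-vector space `V` satisfying the
Jacobi identity, i.e. a Lie algebra structure on `V` over `K`. -/
structure IsLieBracket (K V : Type*) [Field K] [AddCommGroup V] [Module K V]
    (br : V → V → V) : Prop where
  add_left : ∀ x y z, br (x + y) z = br x z + br y z
  smul_left : ∀ (k : K) (x z : V), br (k • x) z = k • br x z
  add_right : ∀ x y z, br x (y + z) = br x y + br x z
  smul_right : ∀ (k : K) (x z : V), br x (k • z) = k • br x z
  alternate : ∀ x, br x x = 0
  jacobi : ∀ x y z, br (br x y) z + br (br y z) x + br (br z x) y = 0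

/-- A representation of the `K`-vector space `A`, equipped with the bracket `brA`,
on the `K`-vector space `V`: an assignment `a ↦ ρ_a` of `K`-linear endomorphisms of `V`,
`K`-linear in `a`, taking `brA` to the commutator bracket. -/
structure IsRep (K A V : Type*) [Field K] [AddCommGroup A] [Module K A]
    [AddCommGroup V] [Module K V] (brA : A → A → A) (ρ : A → V → V) : Prop where
  add_arg : ∀ (a : A) (v w : V), ρ a (v + w) = ρ a v + ρ a w
  smul_arg : ∀ (k : K) (a : A) (v : V), ρ a (k • v) = k • ρ a v
  add_act : ∀ (a b : A) (v : V), ρ (a + b) v = ρ a v + ρ b v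
  smul_act : ∀ (k : K) (a : A) (v : V), ρ (k • a) v = k • ρ a v
  bracket_act : ∀ (a b : A) (v : V), ρ (brA a b) v = ρ a (ρ b v) - ρ b (ρ a v)

/-- The functional `φ ∘ ad_X : Z ↦ φ(⁅X, Z⁆)`. -/
def adDual (K g : Type*) [Field K] [LieRing g] [LieAlgebra K g]
    (X : g) (φ : Module.Dual K g) : Module.Dual K g :=
  φ ∘ₗ LieAlgebra.ad K g X

/-- The coadjoint action of `g` on `g*`: `ρ_X φ = −φ ∘ ad_X`. -/
def coadj (K g : Type*) [Field K] [LieRing g] [LieAlgebra K g]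
    (X : g) (φ : Module.Dual K g) : Module.Dual K g :=
  -adDual K g X φ

/-!
Pairing the first matched pair equation with a test vector `Y ∈ g`, and the second with a test
functional `ψ ∈ g*`, and unfolding both coadjoint actions through `ψ (σ_φ X) = −[φ, ψ]_* X`
and the antisymmetry of the two brackets, each of them turns into the cocycle identity. So
either matched pair equation alone is equivalent to the cocycle condition. That `σ` is a
representation is the Jacobi identity of `[·,·]_*` read through the same pairing, since the
functionals on a vector space separate its points.
-/

open Module

namespace IsLieBracket

variable {K V : Type*} [Field K] [AddCommGroup V] [Module K V] {br : V → V → V}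

theorem neg_left (h : IsLieBracket K V br) (x y : V) : br (-x) y = -br x y := by
  simpa using h.smul_left (-1) x y

theorem neg_right (h : IsLieBracket K V br) (x y : V) : br x (-y) = -br x y := by
  simpa using h.smul_right (-1) x y

theorem anticomm (h : IsLieBracket K V br) (x y : V) : br x y = -br y x := by
  have h0 := h.alternate (x + y)
  rw [h.add_left, h.add_right, h.add_right, h.alternate x, h.alternate y, zero_add, add_zero]
    at h0
  exact eq_neg_of_add_eq_zero_left h0

theorem lie_lie (h : IsLieBracket K V br) (x y z : V) :
    br (br x y) z = br x (br y z) - br y (br x z) := by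
  have jac := h.jacobi x y z
  rw [h.anticomm (br y z) x, h.anticomm (br z x) y, h.anticomm z x, h.neg_right] at jac
  linear_combination (norm := abel) jac

end IsLieBracket

theorem Module.eq_of_forall_dual_apply_eq (K : Type*) {V : Type*} [Field K] [AddCommGroup V]
    [Module K V] {v w : V} (h : ∀ ψ : Dual K V, ψ v = ψ w) : v = w :=
  eval_apply_injective K (LinearMap.ext h)

section DualCoadjoint

variable {K V : Type*} [Field K] [AddCommGroup V] [Module K V]
  {brS : Dual K V → Dual K V → Dual K V} {σ : Dual K V → V → V}

theorem isRep_of_forall_dual_apply (hS : IsLieBracket K (Dual K V) brS)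
    (hσ : ∀ (φ : Dual K V) (X : V) (ψ : Dual K V), ψ (σ φ X) = -(brS φ ψ) X) :
    IsRep K (Dual K V) V brS σ where
  add_arg a v w := eq_of_forall_dual_apply_eq K fun ψ => by simp only [map_add, hσ]; ring
  smul_arg k a v := eq_of_forall_dual_apply_eq K fun ψ => by
    simp only [map_smul, hσ, smul_eq_mul]; ring
  add_act a b v := eq_of_forall_dual_apply_eq K fun ψ => by
    simp only [map_add, hσ, hS.add_left, LinearMap.add_apply]; ring
  smul_act k a b := eq_of_forall_dual_apply_eq K fun ψ => by
    simp only [map_smul, hσ, hS.smul_left, LinearMap.smul_apply, smul_eq_mul]; ring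
  bracket_act a b v := eq_of_forall_dual_apply_eq K fun ψ => by
    simp only [map_sub, hσ, neg_neg, hS.lie_lie, LinearMap.sub_apply, neg_sub]

end DualCoadjoint

section Coadjoint

variable {K g : Type*} [Field K] [LieRing g] [LieAlgebra K g]

@[simp]
theorem adDual_apply (X : g) (φ : Dual K g) (Z : g) : adDual K g X φ Z = φ ⁅X, Z⁆ := rfl

@[simp]
theorem coadj_apply (X : g) (φ : Dual K g) (Z : g) : coadj K g X φ Z = -φ ⁅X, Z⁆ := rfl

theorem coadj_eq_neg_adDual (X : g) (φ : Dual K g) : coadj K g X φ = -adDual K g X φ := rfl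

theorem isRep_coadj : IsRep K g (Dual K g) (fun X₁ X₂ => ⁅X₁, X₂⁆) (coadj K g) where
  add_arg X φ ψ := by ext; simp; ring
  smul_arg k X φ := by ext; simp
  add_act X Y φ := by ext; simp; ring
  smul_act k X φ := by ext; simp
  bracket_act X Y φ := by ext; simp only [coadj_apply, LinearMap.sub_apply, lie_lie, map_sub]; ring

variable (K g) in
def IsLieBialgebraCocycle (brS : Dual K g → Dual K g → Dual K g) : Prop :=
  ∀ (X Y : g) (φ ψ : Dual K g),
    brS φ ψ ⁅X, Y⁆ =
      (brS (adDual K g X φ) ψ + brS φ (adDual K g X ψ)) Y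
        - (brS (adDual K g Y φ) ψ + brS φ (adDual K g Y ψ)) X

variable {brS : Dual K g → Dual K g → Dual K g} (hS : IsLieBracket K (Dual K g) brS)
  {σ : Dual K g → g → g} (hσ : ∀ (φ : Dual K g) (X : g) (ψ : Dual K g), ψ (σ φ X) = -(brS φ ψ) X)
include hσ

theorem apply_lie_sigma (χ φ : Dual K g) (X Z : g) :
    χ ⁅Z, σ φ X⁆ = -brS φ (adDual K g Z χ) X :=
  hσ φ X (adDual K g Z χ)

theorem apply_sigma_lie (χ φ : Dual K g) (X Z : g) :
    χ ⁅σ φ X, Z⁆ = brS φ (adDual K g Z χ) X := by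
  rw [← lie_skew, map_neg, apply_lie_sigma hσ, neg_neg]

include hS

theorem matchedPair_left_apply_iff (X Y : g) (φ₁ φ₂ : Dual K g) :
    coadj K g X (brS φ₁ φ₂) Y =
        (brS (coadj K g X φ₁) φ₂ + brS φ₁ (coadj K g X φ₂)
          + coadj K g (σ φ₂ X) φ₁ - coadj K g (σ φ₁ X) φ₂) Y ↔
      brS φ₁ φ₂ ⁅X, Y⁆ =
        (brS (adDual K g X φ₁) φ₂ + brS φ₁ (adDual K g X φ₂)) Y
          - (brS (adDual K g Y φ₁) φ₂ + brS φ₁ (adDual K g Y φ₂)) X := by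
  have h₁ : coadj K g (σ φ₂ X) φ₁ Y = brS (adDual K g Y φ₁) φ₂ X := by
    rw [coadj_apply, apply_sigma_lie hσ, hS.anticomm φ₂, LinearMap.neg_apply, neg_neg]
  have h₂ : coadj K g (σ φ₁ X) φ₂ Y = -brS φ₁ (adDual K g Y φ₂) X := by
    rw [coadj_apply, apply_sigma_lie hσ]
  rw [LinearMap.sub_apply, LinearMap.add_apply, LinearMap.add_apply, h₁, h₂, coadj_apply]
  simp only [coadj_eq_neg_adDual, hS.neg_left, hS.neg_right, LinearMap.neg_apply,
    LinearMap.add_apply]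
  constructor <;> intro h <;> linear_combination -h

theorem matchedPair_right_apply_iff (φ ψ : Dual K g) (X₁ X₂ : g) :
    ψ (σ φ ⁅X₁, X₂⁆) =
        ψ (⁅σ φ X₁, X₂⁆ + ⁅X₁, σ φ X₂⁆
          + σ (coadj K g X₂ φ) X₁ - σ (coadj K g X₁ φ) X₂) ↔
      brS φ ψ ⁅X₂, X₁⁆ =
        (brS (adDual K g X₂ φ) ψ + brS φ (adDual K g X₂ ψ)) X₁
          - (brS (adDual K g X₁ φ) ψ + brS φ (adDual K g X₁ ψ)) X₂ := by
  have h₁ (X Y : g) : ψ (σ (coadj K g X φ) Y) = brS (adDual K g X φ) ψ Y := by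
    rw [hσ, coadj_eq_neg_adDual, hS.neg_left, LinearMap.neg_apply, neg_neg]
  simp only [map_add, map_sub, apply_sigma_lie hσ, apply_lie_sigma hσ, h₁, hσ,
    LinearMap.add_apply, ← lie_skew X₂ X₁, map_neg]
  constructor <;> intro h <;> linear_combination h

theorem matchedPair_left_iff_isLieBialgebraCocycle :
    (∀ (X : g) (φ₁ φ₂ : Dual K g), coadj K g X (brS φ₁ φ₂) =
        brS (coadj K g X φ₁) φ₂ + brS φ₁ (coadj K g X φ₂)
          + coadj K g (σ φ₂ X) φ₁ - coadj K g (σ φ₁ X) φ₂) ↔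
      IsLieBialgebraCocycle K g brS := by
  simp only [LinearMap.ext_iff, matchedPair_left_apply_iff hS hσ]
  exact ⟨fun h X Y φ ψ => h X φ ψ Y, fun h X φ ψ Y => h X Y φ ψ⟩

theorem matchedPair_right_iff_isLieBialgebraCocycle :
    (∀ (φ : Dual K g) (X₁ X₂ : g), σ φ ⁅X₁, X₂⁆ =
        ⁅σ φ X₁, X₂⁆ + ⁅X₁, σ φ X₂⁆
          + σ (coadj K g X₂ φ) X₁ - σ (coadj K g X₁ φ) X₂) ↔
      IsLieBialgebraCocycle K g brS := by
  refine ⟨fun h X Y φ ψ => ?_, fun h φ X₁ X₂ => eq_of_forall_dual_apply_eq K fun ψ => ?_⟩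
  · exact (matchedPair_right_apply_iff hS hσ φ ψ Y X).1 (congrArg ψ (h φ Y X))
  · exact (matchedPair_right_apply_iff hS hσ φ ψ X₁ X₂).2 (h X₂ X₁ φ ψ)

end Coadjoint

theorem coadjoint_matchedPair_iff_lieBialgebra_general
    (K g : Type*) [Field K] [LieRing g] [LieAlgebra K g]
    (brS : Module.Dual K g → Module.Dual K g → Module.Dual K g)
    (hS : IsLieBracket K (Module.Dual K g) brS)
    (σ : Module.Dual K g → g → g)
    (hσ : ∀ (φ : Module.Dual K g) (X : g) (ψ : Module.Dual K g),
      ψ (σ φ X) = -(brS φ ψ) X) :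
    IsRep K g (Module.Dual K g) (fun X₁ X₂ => ⁅X₁, X₂⁆) (coadj K g)
    ∧ IsRep K (Module.Dual K g) g brS σ
    ∧ (((∀ (X : g) (φ₁ φ₂ : Module.Dual K g), coadj K g X (brS φ₁ φ₂) =
          brS (coadj K g X φ₁) φ₂ + brS φ₁ (coadj K g X φ₂)
            + coadj K g (σ φ₂ X) φ₁ - coadj K g (σ φ₁ X) φ₂)
        ∧ (∀ (φ : Module.Dual K g) (X₁ X₂ : g), σ φ ⁅X₁, X₂⁆ =
          ⁅σ φ X₁, X₂⁆ + ⁅X₁, σ φ X₂⁆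
            + σ (coadj K g X₂ φ) X₁ - σ (coadj K g X₁ φ) X₂))
      ↔ (∀ (X Y : g) (φ ψ : Module.Dual K g),
          brS φ ψ ⁅X, Y⁆ =
            (brS (adDual K g X φ) ψ + brS φ (adDual K g X ψ)) Y
              - (brS (adDual K g Y φ) ψ + brS φ (adDual K g Y ψ)) X)) := by
  refine ⟨isRep_coadj, isRep_of_forall_dual_apply hS hσ, ?_⟩
  exact (and_congr (matchedPair_left_iff_isLieBialgebraCocycle hS hσ)
    (matchedPair_right_iff_isLieBialgebraCocycle hS hσ)).trans and_self_iff

/-- **Matched pair criterion for Lie bialgebras.** Let `g` be a finite-dimensional Lie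
algebra over a field `K` and let `[·,·]_* = brS` be a Lie algebra bracket on `g*`. Let
`ρ_X φ = −φ ∘ ad_X` be the coadjoint action of `g` on `g*`, and let `σ` be the coadjoint
action of `g*` on `g`, characterized by `ψ (σ_φ X) = −[φ, ψ]_* X` for all `ψ ∈ g*`.
Then `ρ` and `σ` are representations, and the matched pair equations hold for
`(g, g*, ρ, σ)` if and only if the cocycle (Lie bialgebra) condition holds. -/
theorem coadjoint_matchedPair_iff_lieBialgebra
    (K g : Type*) [Field K] [LieRing g] [LieAlgebra K g] [FiniteDimensional K g]
    (brS : Module.Dual K g → Module.Dual K g → Module.Dual K g)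
    (hS : IsLieBracket K (Module.Dual K g) brS)
    (σ : Module.Dual K g → g → g)
    (hσ : ∀ (φ : Module.Dual K g) (X : g) (ψ : Module.Dual K g),
      ψ (σ φ X) = -(brS φ ψ) X) :
    IsRep K g (Module.Dual K g) (fun X₁ X₂ => ⁅X₁, X₂⁆) (coadj K g)
    ∧ IsRep K (Module.Dual K g) g brS σ
    ∧ (((∀ (X : g) (φ₁ φ₂ : Module.Dual K g), coadj K g X (brS φ₁ φ₂) =
          brS (coadj K g X φ₁) φ₂ + brS φ₁ (coadj K g X φ₂)
            + coadj K g (σ φ₂ X) φ₁ - coadj K g (σ φ₁ X) φ₂)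
        ∧ (∀ (φ : Module.Dual K g) (X₁ X₂ : g), σ φ ⁅X₁, X₂⁆ =
          ⁅σ φ X₁, X₂⁆ + ⁅X₁, σ φ X₂⁆
            + σ (coadj K g X₂ φ) X₁ - σ (coadj K g X₁ φ) X₂))
      ↔ (∀ (X Y : g) (φ ψ : Module.Dual K g),
          brS φ ψ ⁅X, Y⁆ =
            (brS (adDual K g X φ) ψ + brS φ (adDual K g X ψ)) Y
              - (brS (adDual K g Y φ) ψ + brS φ (adDual K g Y ψ)) X)) :=
  coadjoint_matchedPair_iff_lieBialgebra_general K g brS hS σ hσ
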